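/- Failure of full abstraction: the type (1⊸1)⊸(1⊸1) belongs to ⟦I⟧ but not to ⟦Y*⟧, hence ⟦I⟧ ⊄ ⟦Y*⟧ even though I ⊑ Y* observationally; therefore the relational model given by the type system is not fully abstract. -/

import Mathlib

-- Computational and parallel types
mutual
  inductive CTy : Type
    | one : CTy
    | tens : CTy → CTy → CTy
    | arr : CTy → PTy → CTy
  inductive PTy : Type
    | ofC : CTy → PTy
    | par : PTy → PTy → PTy
end

-- Type equivalence: AC of ⊗ and ⅋, 1 neutral for ⊗
mutual
  inductive CEq : CTy → CTy → Prop
    | refl (τ) : CEq τ τ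
    | symm : CEq τ ρ → CEq ρ τ
    | trans : CEq τ ρ → CEq ρ σ → CEq τ σ
    | comm (τ ρ) : CEq (.tens τ ρ) (.tens ρ τ)
    | assoc (τ ρ σ) : CEq (.tens (.tens τ ρ) σ) (.tens τ (.tens ρ σ))
    | unit (τ) : CEq (.tens τ .one) τ
    | tensCongr : CEq τ τ' → CEq ρ ρ' → CEq (.tens τ ρ) (.tens τ' ρ')
    | arrCongr : CEq τ τ' → PEq α α' → CEq (.arr τ α) (.arr τ' α')
  inductive PEq : PTy → PTy → Prop
    | refl (α) : PEq α α
    | symm : PEq α β → PEq β α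
    | trans : PEq α β → PEq β γ → PEq α γ
    | comm (α β) : PEq (.par α β) (.par β α)
    | assoc (α β γ) : PEq (.par (.par α β) γ) (.par α (.par β γ))
    | parCongr : PEq α α' → PEq β β' → PEq (.par α β) (.par α' β')
    | ofC : CEq τ τ' → PEq (.ofC τ) (.ofC τ')
end

def Ctx : Type := ℕ → CTy
def Ctx.empty : Ctx := fun _ => CTy.one
def Ctx.tens (Γ Δ : Ctx) : Ctx := fun n => CTy.tens (Γ n) (Δ n)
def Ctx.single (x : ℕ) (τ : CTy) : Ctx := fun n => if n = x then τ else CTy.one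
def Ctx.cons (τ : CTy) (Γ : Ctx) : Ctx := fun n =>
  match n with
  | 0 => τ
  | n+1 => Γ n
def CtxEq (Γ Δ : Ctx) : Prop := ∀ n, CEq (Γ n) (Δ n)

def tensList (l : List CTy) : CTy := l.foldr CTy.tens CTy.one
def tensFin (n : ℕ) (f : Fin n → CTy) : CTy := tensList (List.ofFn f)
def tensCtxFin (n : ℕ) (Δ : Fin n → Ctx) : Ctx := fun x => tensFin n (fun i => Δ i x)

def parList : List PTy → PTy
  | [] => PTy.ofC CTy.one
  | [α] => α
  | α :: β :: rest => PTy.par α (parList (β :: rest))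

def parFin (n : ℕ) (f : Fin n → PTy) : PTy := parList (List.ofFn f)

/-- ⅋ᵏ1 : the par of k copies of 1 (left associated); junk value at 0. -/
def parOnes : ℕ → PTy
  | 0 => PTy.ofC CTy.one
  | 1 => PTy.ofC CTy.one
  | n+2 => PTy.par (parOnes (n+1)) (PTy.ofC CTy.one)

/-- Terms of Λ₊∥ in de Bruijn notation. -/
inductive Tm : Type
  | var : ℕ → Tm
  | lam : Tm → Tm
  | app : Tm → Tm → Tm
  | plus : Tm → Tm → Tm
  | par : Tm → Tm → Tm

def IsValue : Tm → Prop
  | .var _ => True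
  | .lam _ => True
  | _ => False

def IsPar : Tm → Prop
  | .par _ _ => True
  | _ => False

def shiftTm (c : ℕ) : Tm → Tm
  | .var n => if n < c then .var n else .var (n+1)
  | .lam M => .lam (shiftTm (c+1) M)
  | .app M N => .app (shiftTm c M) (shiftTm c N)
  | .plus M N => .plus (shiftTm c M) (shiftTm c N)
  | .par M N => .par (shiftTm c M) (shiftTm c N)

/-- Capture-avoiding substitution `M[V/k]` (de Bruijn). -/
def substTm : Tm → ℕ → Tm → Tm
  | .var n, k, V => if n = k then V else if k < n then .var (n-1) else .var n
  | .lam M, k, V => .lam (substTm M (k+1) (shiftTm 0 V))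
  | .app M N, k, V => .app (substTm M k V) (substTm N k V)
  | .plus M N, k, V => .plus (substTm M k V) (substTm N k V)
  | .par M N, k, V => .par (substTm M k V) (substTm N k V)

def closedUnder : ℕ → Tm → Prop
  | d, .var n => n < d
  | d, .lam M => closedUnder (d+1) M
  | d, .app M N => closedUnder d M ∧ closedUnder d N
  | d, .plus M N => closedUnder d M ∧ closedUnder d N
  | d, .par M N => closedUnder d M ∧ closedUnder d N

def Closed (M : Tm) : Prop := closedUnder 0 M

/-- One-step reduction; the boolean flag records whether a +-reduction is used. -/
inductive Step : Bool → Tm → Tm → Prop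
  | beta {M V} : IsValue V → Step false (.app (.lam M) V) (substTm M 0 V)
  | plusL (M N) : Step true (.plus M N) M
  | plusR (M N) : Step true (.plus M N) N
  | parAppL (M N P) : Step false (.app (.par M N) P) (.par (.app M P) (.app N P))
  | parAppR {V} (M N) : IsValue V → Step false (.app V (.par M N)) (.par (.app V M) (.app V N))
  | parL {b M M'} (N) : Step b M M' → Step b (.par M N) (.par M' N)
  | parR {b N N'} (M) : Step b N N' → Step b (.par M N) (.par M N')
  | appL {b M M'} (N) : Step b M M' → ¬ IsPar M → Step b (.app M N) (.app M' N)
  | appR {b M M' V} : IsValue V → Step b M M' → ¬ IsPar M → Step b (.app V M) (.app V M')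

/-- The two contracta of a single +-redex, reduced in context. -/
inductive PlusPair : Tm → Tm → Tm → Prop
  | base (M N) : PlusPair (.plus M N) M N
  | parL {M M₁ M₂} (N) : PlusPair M M₁ M₂ → PlusPair (.par M N) (.par M₁ N) (.par M₂ N)
  | parR {N N₁ N₂} (M) : PlusPair N N₁ N₂ → PlusPair (.par M N) (.par M N₁) (.par M N₂)
  | appL {M M₁ M₂} (N) : PlusPair M M₁ M₂ → ¬ IsPar M → PlusPair (.app M N) (.app M₁ N) (.app M₂ N)
  | appR {M M₁ M₂ V} : IsValue V → PlusPair M M₁ M₂ → ¬ IsPar M → PlusPair (.app V M) (.app V M₁) (.app V M₂)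

/-- n-step reduction. -/
inductive Steps : ℕ → Tm → Tm → Prop
  | refl (M) : Steps 0 M M
  | head {b M N P n} : Step b M N → Steps n N P → Steps (n+1) M P

/-- A closed term converges iff it reduces to a parallel composition of values. -/
def Converges (M : Tm) : Prop :=
  ∃ (n : ℕ) (V : Tm) (Vs : List Tm), IsValue V ∧ (∀ W ∈ Vs, IsValue W) ∧
    Steps n M (Vs.foldl Tm.par V)

/-- Typing derivations, indexed by the measure |π|. -/
inductive Deriv : Ctx → Tm → PTy → ℕ → Prop
  | ax (x : ℕ) (τ : CTy) : Deriv (Ctx.single x τ) (.var x) (.ofC τ) 0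
  | lamI (n : ℕ) (Δ : Fin n → Ctx) (τ : Fin n → CTy) (α : Fin n → PTy) (ms : Fin n → ℕ)
      (M : Tm) :
      (∀ i, Deriv (Ctx.cons (τ i) (Δ i)) M (α i) (ms i)) →
      Deriv (tensCtxFin n Δ) (.lam M)
        (.ofC (tensFin n (fun i => .arr (τ i) (α i)))) (∑ i, ms i)
  | appE (k : ℕ) (hk : 0 < k) (nf : Fin k → ℕ) (hn : ∀ i, 0 < nf i)
      (τ : ∀ i : Fin k, Fin (nf i) → CTy) (α : ∀ i : Fin k, Fin (nf i) → PTy)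
      (Δ : Ctx) (Γ : Fin k → Ctx) (m0 : ℕ) (ms : Fin k → ℕ) (M N : Tm) :
      Deriv Δ M (parFin k (fun i => .ofC (tensFin (nf i) (fun j => .arr (τ i j) (α i j))))) m0 →
      (∀ i, Deriv (Γ i) N (parFin (nf i) (fun j => .ofC (τ i j))) (ms i)) →
      Deriv (Ctx.tens Δ (tensCtxFin k Γ)) (.app M N)
        (parFin k (fun i => parFin (nf i) (α i)))
        ((m0 + (∑ i, ms i) + (∑ i, 2 * nf i)) - 1)
  | plusL {Δ M α m} (N) : Deriv Δ M α m → Deriv Δ (.plus M N) α (m+1)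
  | plusR {Δ N α m} (M) : Deriv Δ N α m → Deriv Δ (.plus M N) α (m+1)
  | parI {Δ Γ M N α β m m'} : Deriv Δ M α m → Deriv Γ N β m' →
      Deriv (Ctx.tens Δ Γ) (.par M N) (.par α β) (m + m')
  | eqv {Γ Γ' M α α' m} : Deriv Γ M α m → CtxEq Γ Γ' → PEq α α' → Deriv Γ' M α' m

def deltaTm : Tm := .lam (.app (.var 0) (.var 0))
def OmegaTm : Tm := .app deltaTm deltaTm
def Idt : Tm := .lam (.var 0)
def dstarTm : Tm := .lam (.lam (.app (.var 1) (.var 1)))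
def YstarTm : Tm := .app dstarTm dstarTm

/-- The type (1⊸1)⊸(1⊸1). -/
def sepTy : CTy := .arr (.arr .one (.ofC .one)) (.ofC (.arr .one (.ofC .one)))

/-!
A variable that does not occur in a term must be typed by something equivalent to `1`. Hence
every type of `λy.xx` is a tensor of arrows with domains `≃ 1`, every type of `λxλy.xx` is a
tensor of arrows whose codomains have that shape, and therefore every type of `Y*` is a par of
tensors of arrows with domains `≃ 1`. This shape is invariant under type equivalence, and
`1 ⊸ 1` is not equivalent to `1`, so `(1 ⊸ 1) ⊸ (1 ⊸ 1)` is a type of `I` but not of `Y*`.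

Operationally, `Y*` reduces to the value `λy.Y*`, which absorbs every argument that reduces to a
value and distributes over a parallel argument. Following an applicative context argument by
argument, whenever `M P₁ ⋯ Pₙ` reaches a parallel composition of values, `Y* P₁ ⋯ Pₙ` reaches a
parallel composition of copies of `λy.Y*`.
-/

def AllArrows (P : CTy → PTy → Prop) : CTy → Prop
  | .one => True
  | .tens τ ρ => AllArrows P τ ∧ AllArrows P ρ
  | .arr σ γ => P σ γ

def AllPar (Q : CTy → Prop) : PTy → Prop
  | .ofC τ => Q τ
  | .par α β => AllPar Q α ∧ AllPar Q β

theorem allArrows_congr {P : CTy → PTy → Prop}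
    (hP : ∀ {σ σ' γ γ'}, CEq σ σ' → PEq γ γ' → P σ γ → P σ' γ') {τ ρ : CTy}
    (h : CEq τ ρ) : AllArrows P τ ↔ AllArrows P ρ := by
  induction h using CEq.rec (motive_2 := fun _ _ _ => True) with
  | refl => exact Iff.rfl
  | symm _ ih => exact ih.symm
  | trans _ _ ih₁ ih₂ => exact ih₁.trans ih₂
  | comm => exact and_comm
  | assoc => exact and_assoc
  | unit => exact iff_of_eq (and_true _)
  | tensCongr _ _ ih₁ ih₂ => exact and_congr ih₁ ih₂
  | arrCongr hσ hγ => exact ⟨hP hσ hγ, hP hσ.symm hγ.symm⟩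
  | _ => trivial

theorem allPar_congr {Q : CTy → Prop} (hQ : ∀ {τ τ'}, CEq τ τ' → Q τ → Q τ')
    {α β : PTy} (h : PEq α β) : AllPar Q α ↔ AllPar Q β :=
  PEq.rec (motive_1 := fun _ _ _ => True) (motive_2 := fun α β _ => AllPar Q α ↔ AllPar Q β)
    (fun _ => trivial) (fun _ _ => trivial) (fun _ _ _ _ => trivial) (fun _ _ => trivial)
    (fun _ _ _ => trivial) (fun _ => trivial) (fun _ _ _ _ => trivial) (fun _ _ _ _ => trivial)
    (fun _ => Iff.rfl) (fun _ ih => ih.symm) (fun _ _ ih₁ ih₂ => ih₁.trans ih₂)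
    (fun _ _ => and_comm) (fun _ _ _ => and_assoc) (fun _ _ ih₁ ih₂ => and_congr ih₁ ih₂)
    (fun hτ _ => ⟨hQ hτ, hQ hτ.symm⟩) h

theorem CEq.not_arr_one {σ : CTy} {γ : PTy} : ¬ CEq (.arr σ γ) .one := fun h =>
  (allArrows_congr (P := fun _ _ => False) (fun _ _ => id) h).2 trivial

theorem allArrows_tensFin {P : CTy → PTy → Prop} {n : ℕ} {f : Fin n → CTy} :
    AllArrows P (tensFin n f) ↔ ∀ i, AllArrows P (f i) := by
  suffices ∀ l : List CTy, AllArrows P (tensList l) ↔ ∀ τ ∈ l, AllArrows P τ by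
    simp [tensFin, this]
  intro l
  induction l with
  | nil => simp [tensList, AllArrows]
  | cons τ l ih => simp [tensList, AllArrows, ← ih]

theorem allPar_parList {Q : CTy → Prop} :
    ∀ {l : List PTy}, l ≠ [] → (AllPar Q (parList l) ↔ ∀ α ∈ l, AllPar Q α)
  | [], h => absurd rfl h
  | [α], _ => by simp [parList]
  | α :: β :: l, _ => by
    simp only [parList, AllPar, allPar_parList (List.cons_ne_nil β l), List.forall_mem_cons]

theorem allPar_parFin {Q : CTy → Prop} {n : ℕ} (hn : 0 < n) {f : Fin n → PTy} :
    AllPar Q (parFin n f) ↔ ∀ i, AllPar Q (f i) := by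
  rw [parFin, allPar_parList (by simpa [List.ofFn_eq_nil_iff] using hn.ne')]
  simp

theorem CEq.tens_one {τ ρ : CTy} (hτ : CEq τ .one) (hρ : CEq ρ .one) :
    CEq (.tens τ ρ) .one :=
  (hτ.tensCongr hρ).trans (.unit .one)

theorem tensFin_ceq_one {n : ℕ} {f : Fin n → CTy} (h : ∀ i, CEq (f i) .one) :
    CEq (tensFin n f) .one := by
  suffices ∀ l : List CTy, (∀ τ ∈ l, CEq τ .one) → CEq (tensList l) .one from
    this _ (by simpa using h)
  intro l hl
  induction l with
  | nil => exact .refl _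
  | cons τ l ih => exact CEq.tens_one (hl τ (by simp)) (ih fun ρ hρ => hl ρ (by simp [hρ]))

def OccursFree : ℕ → Tm → Prop
  | x, .var n => n = x
  | x, .lam M => OccursFree (x + 1) M
  | x, .app M N => OccursFree x M ∨ OccursFree x N
  | x, .plus M N => OccursFree x M ∨ OccursFree x N
  | x, .par M N => OccursFree x M ∨ OccursFree x N

theorem Deriv.ceq_one_of_not_occursFree {Γ : Ctx} {M : Tm} {α : PTy} {m : ℕ}
    (h : Deriv Γ M α m) {x : ℕ} (hx : ¬ OccursFree x M) : CEq (Γ x) .one := by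
  induction h generalizing x with
  | ax y τ =>
    have hxy : x ≠ y := fun e => hx e.symm
    simpa [Ctx.single, hxy] using CEq.refl CTy.one
  | lamI n Δ τ α ms M _ ih => exact tensFin_ceq_one fun i => ih i (x := x + 1) hx
  | appE k _ nf _ τ α Δ Γ m0 ms M N _ _ ihM ihN =>
    simp only [OccursFree, not_or] at hx
    exact CEq.tens_one (ihM hx.1) (tensFin_ceq_one fun i => ihN i hx.2)
  | plusL N _ ih => exact ih fun h => hx (Or.inl h)
  | plusR M _ ih => exact ih fun h => hx (Or.inr h)
  | parI _ _ ih₁ ih₂ =>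
    simp only [OccursFree, not_or] at hx
    exact CEq.tens_one (ih₁ hx.1) (ih₂ hx.2)
  | eqv _ hΓ _ ih => exact (hΓ x).symm.trans (ih hx)

theorem Deriv.allPar_allArrows_of_lam {P : CTy → PTy → Prop}
    (hP : ∀ {σ σ' γ γ'}, CEq σ σ' → PEq γ γ' → P σ γ → P σ' γ') {M : Tm}
    (hM : ∀ {τ Δ β m}, Deriv (Ctx.cons τ Δ) M β m → P τ β)
    {Γ : Ctx} {α : PTy} {m : ℕ} (h : Deriv Γ (.lam M) α m) : AllPar (AllArrows P) α := by
  generalize hL : Tm.lam M = L at h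
  induction h with
  | lamI n Δ τ α ms M' prem =>
    cases hL
    exact allArrows_tensFin.2 fun i => hM (prem i)
  | eqv _ _ hα ih => exact (allPar_congr (fun hτ => (allArrows_congr hP hτ).1) hα).1 (ih hL)
  | _ => cases hL

theorem Deriv.allPar_of_app {Q : CTy → Prop} (hQ : ∀ {τ τ'}, CEq τ τ' → Q τ → Q τ')
    {M : Tm}
    (hM : ∀ {Δ β m}, Deriv Δ M β m → AllPar (AllArrows fun _ γ => AllPar Q γ) β)
    {Γ : Ctx} {N : Tm} {α : PTy} {m : ℕ} (h : Deriv Γ (.app M N) α m) : AllPar Q α := by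
  generalize hA : Tm.app M N = A at h
  induction h with
  | appE k hk nf hn τ α Δ Γ m0 ms M' N' hfun =>
    cases hA
    have hcodom : ∀ i j, AllPar Q (α i j) := fun i =>
      allArrows_tensFin.1 ((allPar_parFin hk).1 (hM hfun) i)
    exact (allPar_parFin hk).2 fun i => (allPar_parFin (hn i)).2 (hcodom i)
  | eqv _ _ hα ih => exact (allPar_congr hQ hα).1 (ih hA)
  | _ => cases hA

def ArrowsFromOne : CTy → Prop := AllArrows fun σ _ => CEq σ .one

theorem ArrowsFromOne.congr {τ τ' : CTy} (h : CEq τ τ') : ArrowsFromOne τ → ArrowsFromOne τ' :=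
  (allArrows_congr (fun hσ _ h => hσ.symm.trans h) h).1

theorem Deriv.allPar_arrowsFromOne_of_lam {Γ : Ctx} {M : Tm} {α : PTy} {m : ℕ}
    (h : Deriv Γ (.lam M) α m) (hM : ¬ OccursFree 0 M) : AllPar ArrowsFromOne α :=
  h.allPar_allArrows_of_lam (fun hσ _ h => hσ.symm.trans h)
    fun hbody => hbody.ceq_one_of_not_occursFree hM

theorem Deriv.allPar_dstarTm {Γ : Ctx} {α : PTy} {m : ℕ} (h : Deriv Γ dstarTm α m) :
    AllPar (AllArrows fun _ γ => AllPar ArrowsFromOne γ) α :=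
  h.allPar_allArrows_of_lam (fun _ hγ h => (allPar_congr ArrowsFromOne.congr hγ).1 h)
    fun hbody => hbody.allPar_arrowsFromOne_of_lam (by simp [OccursFree])

theorem Deriv.allPar_ystarTm {Γ : Ctx} {α : PTy} {m : ℕ} (h : Deriv Γ YstarTm α m) :
    AllPar ArrowsFromOne α :=
  h.allPar_of_app ArrowsFromOne.congr Deriv.allPar_dstarTm

theorem not_deriv_ystarTm_sepTy {Γ : Ctx} {m : ℕ} : ¬ Deriv Γ YstarTm (.ofC sepTy) m :=
  fun h => CEq.not_arr_one h.allPar_ystarTm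

theorem Deriv.lam_of_cons {τ : CTy} {Γ : Ctx} {M : Tm} {α : PTy} {m : ℕ}
    (h : Deriv (Ctx.cons τ Γ) M α m) : Deriv Γ (.lam M) (.ofC (.arr τ α)) m := by
  have h₁ := Deriv.lamI 1 (fun _ => Γ) (fun _ => τ) (fun _ => α) (fun _ => m) M fun _ => h
  rw [Fin.sum_univ_one] at h₁
  exact h₁.eqv (fun _ => .unit _) (.ofC (.unit _))

theorem Deriv.var_zero (τ : CTy) : Deriv (Ctx.cons τ Ctx.empty) (.var 0) (.ofC τ) 0 :=
  (Deriv.ax 0 τ).eqv (fun | 0 => .refl _ | _ + 1 => .refl _) (.refl _)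

theorem deriv_idt_sepTy : Deriv Ctx.empty Idt (.ofC sepTy) 0 :=
  (Deriv.var_zero _).lam_of_cons

def Reduces (M N : Tm) : Prop := ∃ n, Steps n M N

theorem Steps.trans {m n : ℕ} {M N P : Tm} (h₁ : Steps m M N) (h₂ : Steps n N P) :
    Steps (m + n) M P := by
  induction h₁ with
  | refl => simpa using h₂
  | head hs _ ih => simpa [Nat.add_right_comm] using Steps.head hs (ih h₂)

namespace Reduces

theorem refl (M : Tm) : Reduces M M := ⟨0, .refl M⟩

theorem single {b : Bool} {M N : Tm} (h : Step b M N) : Reduces M N := ⟨1, .head h (.refl N)⟩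

theorem trans {M N P : Tm} : Reduces M N → Reduces N P → Reduces M P
  | ⟨_, h₁⟩, ⟨_, h₂⟩ => ⟨_, h₁.trans h₂⟩

theorem head {b : Bool} {M N P : Tm} (h₁ : Step b M N) (h₂ : Reduces N P) : Reduces M P :=
  (single h₁).trans h₂

theorem par_left {A A' : Tm} (B : Tm) : Reduces A A' → Reduces (.par A B) (.par A' B)
  | ⟨n, h⟩ => ⟨n, by induction h with
    | refl => exact .refl _
    | head hs _ ih => exact .head (.parL _ hs) ih⟩

theorem par_right {B B' : Tm} (A : Tm) : Reduces B B' → Reduces (.par A B) (.par A B')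
  | ⟨n, h⟩ => ⟨n, by induction h with
    | refl => exact .refl _
    | head hs _ ih => exact .head (.parR _ hs) ih⟩

theorem par {A A' B B' : Tm} (hA : Reduces A A') (hB : Reduces B B') :
    Reduces (.par A B) (.par A' B') :=
  (hA.par_left B).trans (hB.par_right A')

end Reduces

theorem isPar_iff {M : Tm} : IsPar M ↔ ∃ A B, M = .par A B := by
  cases M <;> simp [IsPar]

theorem IsValue.not_isPar {M : Tm} (h : IsValue M) : ¬ IsPar M := by
  cases M <;> simp_all [IsValue, IsPar]

theorem Step.isPar {b : Bool} {M M' : Tm} (h : Step b M M') (hM : IsPar M) : IsPar M' := by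
  cases h <;> simp_all [IsPar]

theorem Steps.isPar {n : ℕ} {M M' : Tm} (h : Steps n M M') (hM : IsPar M) : IsPar M' := by
  induction h with
  | refl => exact hM
  | head hs _ ih => exact ih (hs.isPar hM)

theorem Steps.par_inv {n : ℕ} {A B t : Tm} (h : Steps n (.par A B) t) :
    ∃ A' B' n₁ n₂,
      t = .par A' B' ∧ Steps n₁ A A' ∧ Steps n₂ B B' ∧ n₁ ≤ n ∧ n₂ ≤ n := by
  generalize hP : Tm.par A B = P at h
  induction h generalizing A B with
  | refl => exact ⟨A, B, 0, 0, hP.symm, .refl _, .refl _, le_rfl, le_rfl⟩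
  | head hs _ ih =>
    subst hP
    cases hs with
    | parL _ hA =>
      obtain ⟨A', B', n₁, n₂, rfl, h₁, h₂, hn₁, hn₂⟩ := ih rfl
      exact ⟨A', B', n₁ + 1, n₂, rfl, .head hA h₁, h₂, by omega, by omega⟩
    | parR _ hB =>
      obtain ⟨A', B', n₁, n₂, rfl, h₁, h₂, hn₁, hn₂⟩ := ih rfl
      exact ⟨A', B', n₁, n₂ + 1, rfl, h₁, .head hB h₂, by omega, by omega⟩

theorem Reduces.par_inv {A B t : Tm} (h : Reduces (.par A B) t) :
    ∃ A' B', t = .par A' B' ∧ Reduces A A' ∧ Reduces B B' :=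
  let ⟨_, h⟩ := h
  let ⟨A', B', _, _, ht, hA, hB, _⟩ := h.par_inv
  ⟨A', B', ht, ⟨_, hA⟩, ⟨_, hB⟩⟩

theorem Reduces.app_left_of_isValue {F v : Tm} (h : Reduces F v) (hv : IsValue v) (P : Tm) :
    Reduces (.app F P) (.app v P) := by
  obtain ⟨n, h⟩ := h
  induction h with
  | refl => exact .refl _
  | head hs hrest ih =>
    exact .head (.appL _ hs fun hp => hv.not_isPar ((hrest.head hs).isPar hp)) (ih hv)

theorem Reduces.app_right_of_isValue {F N v : Tm} (hF : IsValue F) (h : Reduces N v)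
    (hv : IsValue v) : Reduces (.app F N) (.app F v) := by
  obtain ⟨n, h⟩ := h
  induction h with
  | refl => exact .refl _
  | head hs hrest ih =>
    exact .head (.appR hF hs fun hp => hv.not_isPar ((hrest.head hs).isPar hp)) (ih hv)

theorem Reduces.app_left_of_par {H t₁ t₂ : Tm} (h : Reduces H (.par t₁ t₂)) (P : Tm) :
    ∃ A B, Reduces (.app H P) (.par (.app A P) (.app B P)) ∧
      Reduces A t₁ ∧ Reduces B t₂ := by
  obtain ⟨n, h⟩ := h
  generalize ht : Tm.par t₁ t₂ = t at h
  induction h with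
  | refl => subst ht; exact ⟨t₁, t₂, .single (.parAppL _ _ _), .refl _, .refl _⟩
  | @head _ H _ _ _ hs hrest ih =>
    by_cases hH : IsPar H
    · obtain ⟨A, B, rfl⟩ := isPar_iff.1 hH
      obtain ⟨A', B', he, hA, hB⟩ := Reduces.par_inv ⟨_, hrest.head hs⟩
      subst ht; cases he
      exact ⟨A, B, .single (.parAppL _ _ _), hA, hB⟩
    · obtain ⟨A, B, hr, hA, hB⟩ := ih ht
      exact ⟨A, B, .head (.appL _ hs hH) hr, hA, hB⟩

theorem Reduces.app_right_of_par {F N t₁ t₂ : Tm} (hF : IsValue F)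
    (h : Reduces N (.par t₁ t₂)) :
    ∃ A B, Reduces (.app F N) (.par (.app F A) (.app F B)) ∧
      Reduces A t₁ ∧ Reduces B t₂ := by
  obtain ⟨n, h⟩ := h
  generalize ht : Tm.par t₁ t₂ = t at h
  induction h with
  | refl => subst ht; exact ⟨t₁, t₂, .single (.parAppR _ _ hF), .refl _, .refl _⟩
  | @head _ N _ _ _ hs hrest ih =>
    by_cases hN : IsPar N
    · obtain ⟨A, B, rfl⟩ := isPar_iff.1 hN
      obtain ⟨A', B', he, hA, hB⟩ := Reduces.par_inv ⟨_, hrest.head hs⟩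
      subst ht; cases he
      exact ⟨A, B, .single (.parAppR _ _ hF), hA, hB⟩
    · obtain ⟨A, B, hr, hA, hB⟩ := ih ht
      exact ⟨A, B, .head (.appR hF hs hN) hr, hA, hB⟩

inductive ParOf (p : Tm → Prop) : Tm → Prop
  | single {v : Tm} : p v → ParOf p v
  | par {t v : Tm} : ParOf p t → p v → ParOf p (.par t v)

theorem ParOf.mono {p q : Tm → Prop} (hpq : ∀ {v}, p v → q v) {t : Tm} (h : ParOf p t) :
    ParOf q t := by
  induction h with
  | single hv => exact .single (hpq hv)
  | par _ hv ih => exact .par ih (hpq hv)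

def ReducesToParOf (p : Tm → Prop) (M : Tm) : Prop := ∃ t, Reduces M t ∧ ParOf p t

def ReducesToValue (M : Tm) : Prop := ∃ v, Reduces M v ∧ IsValue v

theorem ReducesToValue.reducesToParOf {M : Tm} : ReducesToValue M → ReducesToParOf IsValue M
  | ⟨v, h, hv⟩ => ⟨v, h, .single hv⟩

theorem ReducesToParOf.par {A B : Tm} :
    ReducesToParOf IsValue A → ReducesToValue B → ReducesToParOf IsValue (.par A B)
  | ⟨s, hs, hps⟩, ⟨w, hw, hwv⟩ => ⟨.par s w, hs.par hw, .par hps hwv⟩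

theorem parOf_isValue_iff {t : Tm} :
    ParOf IsValue t ↔ ∃ (V : Tm) (Vs : List Tm),
      IsValue V ∧ (∀ W ∈ Vs, IsValue W) ∧ t = Vs.foldl Tm.par V := by
  constructor
  · intro h
    induction h with
    | @single v hv => exact ⟨v, [], hv, by simp, rfl⟩
    | @par t v _ hv ih =>
      obtain ⟨V, Vs, hV, hVs, rfl⟩ := ih
      exact ⟨V, Vs ++ [v], hV, by simpa [or_imp, forall_and] using ⟨hVs, hv⟩, by simp⟩
  · rintro ⟨V, Vs, hV, hVs, rfl⟩
    induction Vs using List.reverseRecOn with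
    | nil => exact .single hV
    | append_singleton Vs W ih =>
      simp only [List.mem_append, List.mem_singleton, or_imp, forall_and, forall_eq] at hVs
      simpa using ParOf.par (ih hVs.1) hVs.2

theorem converges_iff_reducesToParOf {M : Tm} : Converges M ↔ ReducesToParOf IsValue M := by
  simp only [Converges, ReducesToParOf, Reduces, parOf_isValue_iff]
  constructor
  · rintro ⟨n, V, Vs, hV, hVs, h⟩
    exact ⟨_, ⟨n, h⟩, V, Vs, hV, hVs, rfl⟩
  · rintro ⟨_, ⟨n, h⟩, V, Vs, hV, hVs, rfl⟩
    exact ⟨n, V, Vs, hV, hVs, h⟩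

theorem reducesToParOf_app_left {p q : Tm → Prop} {P : Tm}
    (hp : ∀ {H v}, Reduces H v → p v → ∃ w, Reduces (.app H P) w ∧ q w) {t : Tm}
    (ht : ParOf p t) {H : Tm} (hH : Reduces H t) : ReducesToParOf q (.app H P) := by
  induction ht generalizing H with
  | single hv =>
    obtain ⟨w, hw, hqw⟩ := hp hH hv
    exact ⟨w, hw, .single hqw⟩
  | par _ hv ih =>
    obtain ⟨A, B, hr, hA, hB⟩ := hH.app_left_of_par P
    obtain ⟨s, hs, hps⟩ := ih hA
    obtain ⟨w, hw, hqw⟩ := hp hB hv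
    exact ⟨.par s w, hr.trans (hs.par hw), .par hps hqw⟩

theorem reducesToParOf_app_right {p q : Tm → Prop} {F : Tm} (hF : IsValue F)
    (hp : ∀ {N v}, Reduces N v → p v → ∃ w, Reduces (.app F N) w ∧ q w) {t : Tm}
    (ht : ParOf p t) {N : Tm} (hN : Reduces N t) : ReducesToParOf q (.app F N) := by
  induction ht generalizing N with
  | single hv =>
    obtain ⟨w, hw, hqw⟩ := hp hN hv
    exact ⟨w, hw, .single hqw⟩
  | par _ hv ih =>
    obtain ⟨A, B, hr, hA, hB⟩ := Reduces.app_right_of_par hF hN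
    obtain ⟨s, hs, hps⟩ := ih hA
    obtain ⟨w, hw, hqw⟩ := hp hB hv
    exact ⟨.par s w, hr.trans (hs.par hw), .par hps hqw⟩

theorem Steps.reducesToValue_of_app {n : ℕ} {M N v : Tm} (h : Steps n (.app M N) v)
    (hv : IsValue v) : ReducesToValue M ∧ ReducesToValue N := by
  generalize hA : Tm.app M N = A at h
  induction h generalizing M N with
  | refl => subst hA; simp [IsValue] at hv
  | head hs hrest ih =>
    subst hA
    cases hs with
    | beta hV => exact ⟨⟨_, .refl _, trivial⟩, ⟨_, .refl _, hV⟩⟩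
    | parAppL => exact absurd (hrest.isPar trivial) hv.not_isPar
    | parAppR => exact absurd (hrest.isPar trivial) hv.not_isPar
    | appL _ hM =>
      obtain ⟨⟨w, hw, hwv⟩, hN⟩ := ih hv rfl
      exact ⟨⟨w, .head hM hw, hwv⟩, hN⟩
    | appR _ hN =>
      obtain ⟨hM, ⟨w, hw, hwv⟩⟩ := ih hv rfl
      exact ⟨hM, ⟨w, .head hN hw, hwv⟩⟩

theorem Steps.reducesToParOf_of_app {n : ℕ} {M N t : Tm} (h : Steps n (.app M N) t)
    (ht : ParOf IsValue t) :
    (ReducesToParOf IsValue M ∧ ReducesToValue N) ∨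
      (ReducesToValue M ∧ ReducesToParOf IsValue N) := by
  induction n using Nat.strong_induction_on generalizing M N t with
  | _ n ih =>
    cases h with
    | refl => cases ht with | single hv => simp [IsValue] at hv
    | head hs hrest =>
      cases hs with
      | beta hV => exact .inl ⟨⟨_, .refl _, .single trivial⟩, ⟨_, .refl _, hV⟩⟩
      | parAppL M₁ M₂ =>
        obtain ⟨t₁, t₂, n₁, n₂, rfl, h₁, h₂, hn₁, -⟩ := hrest.par_inv
        cases ht with
        | single hv => simp [IsValue] at hv
        | par ht₁ hv₂ =>
          obtain ⟨hM₂, hN⟩ := h₂.reducesToValue_of_app hv₂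
          have hM₁ : ReducesToParOf IsValue M₁ :=
            (ih n₁ (by omega) h₁ ht₁).elim (·.1) (·.1.reducesToParOf)
          exact .inl ⟨hM₁.par hM₂, hN⟩
      | parAppR N₁ N₂ hV =>
        obtain ⟨t₁, t₂, n₁, n₂, rfl, h₁, h₂, hn₁, -⟩ := hrest.par_inv
        cases ht with
        | single hv => simp [IsValue] at hv
        | par ht₁ hv₂ =>
          obtain ⟨-, hN₂⟩ := h₂.reducesToValue_of_app hv₂
          have hN₁ : ReducesToParOf IsValue N₁ :=
            (ih n₁ (by omega) h₁ ht₁).elim (·.2.reducesToParOf) (·.2)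
          exact .inr ⟨⟨_, .refl _, hV⟩, hN₁.par hN₂⟩
      | appL _ hM =>
        rcases ih _ (by omega) hrest ht with ⟨⟨s, hs, hps⟩, hN⟩ | ⟨⟨w, hw, hwv⟩, hN⟩
        · exact .inl ⟨⟨s, .head hM hs, hps⟩, hN⟩
        · exact .inr ⟨⟨w, .head hM hw, hwv⟩, hN⟩
      | appR hV hN =>
        rcases ih _ (by omega) hrest ht with ⟨hM, ⟨w, hw, hwv⟩⟩ | ⟨hM, ⟨s, hs, hps⟩⟩
        · exact .inl ⟨hM, ⟨w, .head hN hw, hwv⟩⟩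
        · exact .inr ⟨hM, ⟨s, .head hN hs, hps⟩⟩

def lamYstar : Tm := .lam YstarTm

theorem isValue_lamYstar : IsValue lamYstar := trivial

theorem reduces_ystarTm : Reduces YstarTm lamYstar := by
  simpa [substTm, shiftTm, dstarTm, lamYstar, YstarTm] using
    Reduces.single (Step.beta (M := .lam (.app (.var 1) (.var 1))) (V := dstarTm) trivial)

theorem Reduces.app_lamYstar {H P : Tm} (hH : Reduces H lamYstar) (hP : ReducesToValue P) :
    Reduces (.app H P) lamYstar := by
  obtain ⟨v, hP, hv⟩ := hP
  have hbeta : Reduces (.app lamYstar v) YstarTm := by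
    simpa [substTm, dstarTm, YstarTm, lamYstar] using Reduces.single (Step.beta (M := YstarTm) hv)
  exact (hH.app_left_of_isValue isValue_lamYstar P).trans
    ((Reduces.app_right_of_isValue isValue_lamYstar hP hv).trans (hbeta.trans reduces_ystarTm))

-- The first clause is indispensable: an argument converging to a parallel composition is
-- absorbed by a single `λy.Y*`, but not by a parallel composition of copies of it.
def DominatedByYstar (F G : Tm) : Prop :=
  (ReducesToValue F → Reduces G lamYstar) ∧
    (ReducesToParOf IsValue F → ReducesToParOf (· = lamYstar) G)

theorem dominatedByYstar_ystarTm (F : Tm) : DominatedByYstar F YstarTm :=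
  ⟨fun _ => reduces_ystarTm, fun _ => ⟨lamYstar, reduces_ystarTm, .single rfl⟩⟩

theorem DominatedByYstar.app {F G : Tm} (h : DominatedByYstar F G) (P : Tm) :
    DominatedByYstar (.app F P) (.app G P) := by
  refine ⟨fun ⟨v, ⟨_, hF⟩, hv⟩ => ?_, fun ⟨t, ⟨_, hF⟩, ht⟩ => ?_⟩
  · obtain ⟨hF, hP⟩ := hF.reducesToValue_of_app hv
    exact (h.1 hF).app_lamYstar hP
  · rcases hF.reducesToParOf_of_app ht with ⟨hF, hP⟩ | ⟨hF, ⟨s, hPs, hs⟩⟩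
    · obtain ⟨u, hGu, hu⟩ := h.2 hF
      refine reducesToParOf_app_left (q := (· = lamYstar)) ?_ hu hGu
      rintro H _ hH rfl
      exact ⟨_, hH.app_lamYstar hP, rfl⟩
    · have hG := (h.1 hF).app_left_of_isValue isValue_lamYstar P
      obtain ⟨w, hw, hpw⟩ := reducesToParOf_app_right (q := (· = lamYstar)) isValue_lamYstar
        (fun hN hv => ⟨_, (Reduces.refl _).app_lamYstar ⟨_, hN, hv⟩, rfl⟩) hs hPs
      exact ⟨w, hG.trans hw, hpw⟩

theorem DominatedByYstar.foldl {F G : Tm} (h : DominatedByYstar F G) (Ps : List Tm) :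
    DominatedByYstar (Ps.foldl .app F) (Ps.foldl .app G) := by
  induction Ps generalizing F G with
  | nil => exact h
  | cons P Ps ih => exact ih (h.app P)

theorem converges_foldl_ystarTm (M : Tm) (Ps : List Tm) (h : Converges (Ps.foldl .app M)) :
    Converges (Ps.foldl .app YstarTm) := by
  rw [converges_iff_reducesToParOf] at h ⊢
  obtain ⟨t, ht, hpt⟩ := ((dominatedByYstar_ystarTm M).foldl Ps).2 h
  exact ⟨t, ht, hpt.mono fun hv => hv ▸ trivial⟩

theorem no_full_abstraction :
    (∃ m, Deriv Ctx.empty Idt (.ofC sepTy) m) ∧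
    (¬ ∃ m, Deriv Ctx.empty YstarTm (.ofC sepTy) m) ∧
    (∀ Ps : List Tm, (∀ P ∈ Ps, Closed P) →
      Converges (Ps.foldl Tm.app Idt) → Converges (Ps.foldl Tm.app YstarTm)) :=
  ⟨⟨0, deriv_idt_sepTy⟩, fun ⟨_, h⟩ => not_deriv_ystarTm_sepTy h,
    fun Ps _ => converges_foldl_ystarTm Idt Ps⟩
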